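/- arXiv:2404.11438 — 4 statements merged into one kernel-verified Lean document; each statement's English description precedes it below -/
import Mathlib

section
/- Let B_{k,i} (k ∈ {0,…,p}, i ∈ {1,…,M}) be Bernoulli random variables such that for each i, exactly one of B_{0,i},…,B_{p,i} equals 1 almost surely. Define F̂_k := (1/M) Σ_{i=1}^M B_{k,i}, F_k := E[F̂_k], and C_N := (1/M) Σ_{i=1}^M Σ_{j≠i} Σ_{k=0}^p Cov(B_{k,i}, B_{k,j}). Then for all t > 0, P(max_{0≤k≤p} |F̂_k − F_k| ≥ t) ≤ (1 + C_N)/(M t²). -/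
open MeasureTheory Finset

/-- For mutually exclusive/exhaustive Bernoulli arrays B_{k,i},
with F̂_k := (1/M) Σ_i B_{k,i}, F_k := E[F̂_k] and
C_N := (1/M) Σ_i Σ_{j≠i} Σ_k Cov(B_{k,i}, B_{k,j}), for all t > 0,
P(max_k |F̂_k − F_k| ≥ t) ≤ (1 + C_N)/(M t²). -/
theorem stmt_4 {Ω : Type*} [MeasurableSpace Ω] (μ : Measure Ω) [IsProbabilityMeasure μ]
    (p M : ℕ) (hM : 0 < M)
    (B : Fin (p + 1) → Fin M → Ω → ℝ)
    (hmeas : ∀ k i, Measurable (B k i))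
    (h01 : ∀ k i ω, B k i ω = 0 ∨ B k i ω = 1)
    (hexcl : ∀ i, ∀ᵐ ω ∂μ, ∑ k : Fin (p + 1), B k i ω = 1)
    (t : ℝ) (ht : 0 < t) :
    (μ {ω | ∃ k : Fin (p + 1),
        t ≤ |(1 / (M : ℝ)) * ∑ i : Fin M, B k i ω
          - ∫ ω', (1 / (M : ℝ)) * ∑ i : Fin M, B k i ω' ∂μ|}).toReal ≤
      (1 + (1 / (M : ℝ)) * ∑ i : Fin M, ∑ j ∈ Finset.univ.erase i,
          ∑ k : Fin (p + 1),
            ((∫ ω, B k i ω * B k j ω ∂μ)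
              - (∫ ω, B k i ω ∂μ) * (∫ ω, B k j ω ∂μ)))
        / ((M : ℝ) * t ^ 2) := by
  classical
  have hM0 : (0:ℝ) < (M:ℝ) := by exact_mod_cast hM
  -- basic integrability facts
  have hBnorm : ∀ (k : Fin (p+1)) (i : Fin M), ∀ᵐ ω ∂μ, ‖B k i ω‖ ≤ 1 := by
    intro k i
    filter_upwards with ω
    rcases h01 k i ω with h | h <;> simp [h]
  have hmem2 : ∀ k i, MemLp (B k i) 2 μ := fun k i =>
    (memLp_top_of_bound (hmeas k i).aestronglyMeasurable 1
      (hBnorm k i)).mono_exponent le_top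
  have hint : ∀ k i, Integrable (B k i) μ := fun k i =>
    memLp_one_iff_integrable.mp ((hmem2 k i).mono_exponent (by norm_num))
  have hintmul : ∀ (k : Fin (p+1)) (i j : Fin M),
      Integrable (fun ω => B k i ω * B k j ω) μ := by
    intro k i j
    have hb : ∀ᵐ ω ∂μ, ‖B k i ω * B k j ω‖ ≤ 1 := by
      filter_upwards with ω
      rcases h01 k i ω with h | h <;> rcases h01 k j ω with h' | h' <;> simp [h, h']
    exact memLp_one_iff_integrable.mp
      (((memLp_top_of_bound ((hmeas k i).mul (hmeas k j)).aestronglyMeasurable 1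
        hb)).mono_exponent le_top)
  set X : Fin (p+1) → Ω → ℝ := fun k ω => 1/(M:ℝ) * ∑ i : Fin M, B k i ω with hXdef
  have hXmem : ∀ k, MemLp (X k) 2 μ := by
    intro k
    have h := (memLp_finset_sum' (μ := μ) univ
      (fun (i : Fin M) (_ : i ∈ univ) => hmem2 k i)).const_mul (1/(M:ℝ))
    simpa [hXdef, Finset.sum_apply] using h
  -- covariance-like quantities
  set c : Fin (p+1) → Fin M → Fin M → ℝ := fun k i j =>
    (∫ ω, B k i ω * B k j ω ∂μ) - (∫ ω, B k i ω ∂μ) * (∫ ω, B k j ω ∂μ) with hcdef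
  -- variance formula
  have hvar : ∀ k, ProbabilityTheory.variance (X k) μ
      = (1/(M:ℝ))^2 * ∑ i : Fin M, ∑ j : Fin M, c k i j := by
    intro k
    rw [ProbabilityTheory.variance_eq_sub (hXmem k)]
    have h1 : (∫ ω, X k ω ∂μ) = 1/(M:ℝ) * ∑ i : Fin M, ∫ ω, B k i ω ∂μ := by
      rw [hXdef]
      simp only
      rw [integral_const_mul, integral_finset_sum _ (fun i _ => hint k i)]
    have h2 : (∫ ω, (X k ω) ^ 2 ∂μ)
        = (1/(M:ℝ))^2 * ∑ i : Fin M, ∑ j : Fin M, ∫ ω, B k i ω * B k j ω ∂μ := by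
      have heq : ∀ ω, (X k ω) ^ 2
          = (1/(M:ℝ))^2 * ∑ i : Fin M, ∑ j : Fin M, B k i ω * B k j ω := by
        intro ω
        rw [hXdef]
        simp only
        rw [mul_pow, sq (∑ i : Fin M, B k i ω), Finset.sum_mul_sum]
      rw [integral_congr_ae (Filter.Eventually.of_forall heq), integral_const_mul,
        integral_finset_sum _ (fun i _ => integrable_finset_sum _ (fun j _ => hintmul k i j))]
      congr 1
      exact Finset.sum_congr rfl fun i _ =>
        integral_finset_sum _ (fun j _ => hintmul k i j)
    calc (∫ ω, (X k ^ 2) ω ∂μ) - (∫ ω, X k ω ∂μ) ^ 2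
        = (∫ ω, (X k ω) ^ 2 ∂μ) - (∫ ω, X k ω ∂μ) ^ 2 := rfl
      _ = (1/(M:ℝ))^2 * ∑ i : Fin M, ∑ j : Fin M, c k i j := by
          rw [h1, h2, hcdef]
          simp only [Finset.sum_sub_distrib, mul_pow, sq (∑ i : Fin M, ∫ ω, B k i ω ∂μ),
            Finset.sum_mul_sum]
          ring
  -- Chebyshev + union bound
  have hsum_nonneg : ∀ k, 0 ≤ ProbabilityTheory.variance (X k) μ / t ^ 2 := fun k =>
    div_nonneg (ProbabilityTheory.variance_nonneg _ _) (sq_nonneg t)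
  have hstep1 : (μ {ω | ∃ k : Fin (p + 1),
      t ≤ |X k ω - ∫ ω', X k ω' ∂μ|}).toReal
      ≤ ∑ k : Fin (p+1), ProbabilityTheory.variance (X k) μ / t ^ 2 := by
    apply ENNReal.toReal_le_of_le_ofReal
      (Finset.sum_nonneg fun k _ => hsum_nonneg k)
    calc μ {ω | ∃ k : Fin (p + 1), t ≤ |X k ω - ∫ ω', X k ω' ∂μ|}
        = μ (⋃ k : Fin (p+1), {ω | t ≤ |X k ω - ∫ ω', X k ω' ∂μ|}) := by
          congr 1; ext ω; simp [Set.mem_iUnion]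
      _ ≤ ∑ k : Fin (p+1), μ {ω | t ≤ |X k ω - ∫ ω', X k ω' ∂μ|} := by
          exact measure_iUnion_fintype_le _ _
      _ ≤ ∑ k : Fin (p+1), ENNReal.ofReal (ProbabilityTheory.variance (X k) μ / t ^ 2) :=
          Finset.sum_le_sum fun k _ =>
            ProbabilityTheory.meas_ge_le_variance_div_sq (hXmem k) ht
      _ = ENNReal.ofReal (∑ k : Fin (p+1), ProbabilityTheory.variance (X k) μ / t ^ 2) :=
          (ENNReal.ofReal_sum_of_nonneg fun k _ => hsum_nonneg k).symm
  -- bound the sum of variances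
  have hdiag : ∑ k : Fin (p+1), ∑ i : Fin M, c k i i ≤ (M:ℝ) := by
    have hle : ∀ (k : Fin (p+1)) (i : Fin M), c k i i ≤ ∫ ω, B k i ω ∂μ := by
      intro k i
      have hBB : (∫ ω, B k i ω * B k i ω ∂μ) = ∫ ω, B k i ω ∂μ := by
        apply integral_congr_ae
        filter_upwards with ω
        rcases h01 k i ω with h | h <;> simp [h]
      rw [hcdef]
      simp only
      rw [hBB]
      nlinarith [sq_nonneg (∫ ω, B k i ω ∂μ)]
    calc ∑ k : Fin (p+1), ∑ i : Fin M, c k i i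
        ≤ ∑ k : Fin (p+1), ∑ i : Fin M, ∫ ω, B k i ω ∂μ :=
          Finset.sum_le_sum fun k _ => Finset.sum_le_sum fun i _ => hle k i
      _ = ∑ i : Fin M, ∫ ω, ∑ k : Fin (p+1), B k i ω ∂μ := by
          rw [Finset.sum_comm]
          exact Finset.sum_congr rfl fun i _ =>
            (integral_finset_sum _ (fun k _ => hint k i)).symm
      _ = ∑ i : Fin M, (1:ℝ) := by
          refine Finset.sum_congr rfl fun i _ => ?_
          rw [integral_congr_ae (hexcl i)]
          simp
      _ = (M:ℝ) := by simp
  set D : ℝ := ∑ i : Fin M, ∑ j ∈ Finset.univ.erase i, ∑ k : Fin (p+1), c k i j with hDdef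
  have hVsum : ∑ k : Fin (p+1), ProbabilityTheory.variance (X k) μ
      ≤ (1 + (1/(M:ℝ)) * D) / (M:ℝ) := by
    have hsplit : ∑ k : Fin (p+1), ∑ i : Fin M, ∑ j : Fin M, c k i j
        = (∑ k : Fin (p+1), ∑ i : Fin M, c k i i) + D := by
      have h1 : ∀ (k : Fin (p+1)) (i : Fin M), ∑ j : Fin M, c k i j
          = c k i i + ∑ j ∈ Finset.univ.erase i, c k i j :=
        fun k i => (Finset.add_sum_erase _ _ (Finset.mem_univ i)).symm
      have h2 : ∑ k : Fin (p+1), ∑ i : Fin M, ∑ j ∈ Finset.univ.erase i, c k i j = D := by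
        rw [hDdef, Finset.sum_comm]
        exact Finset.sum_congr rfl fun i _ => Finset.sum_comm
      simp only [h1, Finset.sum_add_distrib]
      rw [h2]
    calc ∑ k : Fin (p+1), ProbabilityTheory.variance (X k) μ
        = (1/(M:ℝ))^2 * ∑ k : Fin (p+1), ∑ i : Fin M, ∑ j : Fin M, c k i j := by
          rw [Finset.mul_sum]
          exact Finset.sum_congr rfl fun k _ => hvar k
      _ = (1/(M:ℝ))^2 * ((∑ k : Fin (p+1), ∑ i : Fin M, c k i i) + D) := by rw [hsplit]
      _ ≤ (1/(M:ℝ))^2 * ((M:ℝ) + D) := by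
          apply mul_le_mul_of_nonneg_left _ (sq_nonneg _)
          linarith [hdiag]
      _ = (1 + (1/(M:ℝ)) * D) / (M:ℝ) := by
          have hMne : (M:ℝ) ≠ 0 := ne_of_gt hM0
          rw [eq_div_iff hMne]
          field_simp
  -- conclude
  have hgoal : ∑ k : Fin (p+1), ProbabilityTheory.variance (X k) μ / t ^ 2
      ≤ (1 + (1/(M:ℝ)) * D) / ((M:ℝ) * t ^ 2) := by
    rw [← Finset.sum_div, ← div_div]
    exact div_le_div_of_nonneg_right hVsum (sq_nonneg t) |>.trans_eq rfl
  exact hstep1.trans hgoal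
end

section
/- Let B_{k,i} be Bernoulli random variables with P(B_{k,i} = 1) > 0 for all (k,i), such that for each i exactly one of B_{0,i},…,B_{p,i} equals 1 almost surely. Define F̂_k := (1/M) Σ_i B_{k,i}, F_k := E[F̂_k], and Δ_N := (1/M) Σ_{i=1}^M Σ_{k=0}^p P(B_{k,i}=1) Σ_{j≠i} [P(B_{k,j}=1 | B_{k,i}=1) − P(B_{k,j}=1)]. Then for all t > 0, P(max_{0≤k≤p} |F̂_k − F_k| ≥ t) ≤ (1 + Δ_N)/(M t²). -/
open MeasureTheory Finset


lemma integral_of01 {Ω : Type*} [MeasurableSpace Ω] (μ : Measure Ω) [IsFiniteMeasure μ]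
    {f : Ω → ℝ} (hm : Measurable f) (h : ∀ ω, f ω = 0 ∨ f ω = 1) :
    ∫ ω, f ω ∂μ = (μ {ω | f ω = 1}).toReal := by
  have hs : MeasurableSet {ω | f ω = 1} := hm (measurableSet_singleton 1)
  have he : ∀ ω, f ω = Set.indicator {ω | f ω = 1} (fun _ => (1:ℝ)) ω := by
    intro ω
    rcases h ω with h0 | h1
    · simp [Set.indicator_apply, h0]
    · simp [Set.indicator_apply, h1]
  rw [integral_congr_ae (Filter.Eventually.of_forall he), integral_indicator hs]
  simp
  rfl

lemma memLp_of01 {Ω : Type*} [MeasurableSpace Ω] (μ : Measure Ω) [IsFiniteMeasure μ]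
    {f : Ω → ℝ} (hm : Measurable f) (h : ∀ ω, f ω = 0 ∨ f ω = 1) (q : ENNReal) :
    MemLp f q μ := by
  refine memLp_of_bounded (a := 0) (b := 1) (Filter.Eventually.of_forall fun ω => ?_)
    hm.aestronglyMeasurable q
  rcases h ω with h | h <;> simp [h, Set.mem_Icc]

lemma integrable_of01 {Ω : Type*} [MeasurableSpace Ω] (μ : Measure Ω) [IsFiniteMeasure μ]
    {f : Ω → ℝ} (hm : Measurable f) (h : ∀ ω, f ω = 0 ∨ f ω = 1) :
    Integrable f μ :=
  memLp_one_iff_integrable.mp (memLp_of01 μ hm h 1)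

/-- For mutually exclusive/exhaustive Bernoulli arrays B_{k,i} with
P(B_{k,i}=1) > 0, with F̂_k := (1/M) Σ_i B_{k,i}, F_k := E[F̂_k] and
Δ_N := (1/M) Σ_i Σ_k P(B_{k,i}=1) Σ_{j≠i} [P(B_{k,j}=1 | B_{k,i}=1) − P(B_{k,j}=1)],
for all t > 0, P(max_k |F̂_k − F_k| ≥ t) ≤ (1 + Δ_N)/(M t²). -/
theorem stmt_5 {Ω : Type*} [MeasurableSpace Ω] (μ : Measure Ω) [IsProbabilityMeasure μ]
    (p M : ℕ) (hM : 0 < M)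
    (B : Fin (p + 1) → Fin M → Ω → ℝ)
    (hmeas : ∀ k i, Measurable (B k i))
    (h01 : ∀ k i ω, B k i ω = 0 ∨ B k i ω = 1)
    (hexcl : ∀ i, ∀ᵐ ω ∂μ, ∑ k : Fin (p + 1), B k i ω = 1)
    (hpos : ∀ k i, 0 < (μ {ω | B k i ω = 1}).toReal)
    (t : ℝ) (ht : 0 < t) :
    (μ {ω | ∃ k : Fin (p + 1),
        t ≤ |(1 / (M : ℝ)) * ∑ i : Fin M, B k i ω
          - ∫ ω', (1 / (M : ℝ)) * ∑ i : Fin M, B k i ω' ∂μ|}).toReal ≤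
      (1 + (1 / (M : ℝ)) * ∑ i : Fin M, ∑ k : Fin (p + 1),
          (μ {ω | B k i ω = 1}).toReal *
            ∑ j ∈ Finset.univ.erase i,
              ((μ ({ω | B k j ω = 1} ∩ {ω | B k i ω = 1})).toReal
                  / (μ {ω | B k i ω = 1}).toReal
                - (μ {ω | B k j ω = 1}).toReal))
        / ((M : ℝ) * t ^ 2) := by
  classical
  have hM0 : ((M : ℝ)) ≠ 0 := Nat.cast_ne_zero.mpr hM.ne'
  set Pr : Fin (p + 1) → Fin M → ℝ := fun k i => (μ {ω | B k i ω = 1}).toReal with hPrdef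
  set Q : Fin (p + 1) → Fin M → Fin M → ℝ :=
    fun k i j => (μ ({ω | B k i ω = 1} ∩ {ω | B k j ω = 1})).toReal with hQdef
  -- basic integrability facts
  have hint : ∀ k i, Integrable (B k i) μ := fun k i => integrable_of01 μ (hmeas k i) (h01 k i)
  have hmul01 : ∀ k i j ω, B k i ω * B k j ω = 0 ∨ B k i ω * B k j ω = 1 := by
    intro k i j ω
    rcases h01 k i ω with h | h <;> rcases h01 k j ω with h' | h' <;> simp [h, h']
  have hintmul : ∀ k i j, Integrable (fun ω => B k i ω * B k j ω) μ :=
    fun k i j => integrable_of01 μ ((hmeas k i).mul (hmeas k j)) (hmul01 k i j)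
  -- expectations
  have hEB : ∀ k i, ∫ ω, B k i ω ∂μ = Pr k i := fun k i => integral_of01 μ (hmeas k i) (h01 k i)
  have hEBB : ∀ k i j, ∫ ω, B k i ω * B k j ω ∂μ = Q k i j := by
    intro k i j
    rw [integral_of01 (f := fun ω => B k i ω * B k j ω) μ ((hmeas k i).mul (hmeas k j)) (hmul01 k i j)]
    congr 1
    congr 1
    ext ω
    simp only [Set.mem_setOf_eq, Set.mem_inter_iff]
    constructor
    · intro h
      rcases h01 k i ω with h' | h' <;> rcases h01 k j ω with h'' | h'' <;>
        simp [h', h''] at h ⊢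
    · rintro ⟨h1, h2⟩; rw [h1, h2]; ring
  have hQii : ∀ k i, Q k i i = Pr k i := by
    intro k i; simp [hQdef, hPrdef]
  have hQsymm : ∀ k i j, Q k i j = Q k j i := by
    intro k i j; simp [hQdef, Set.inter_comm]
  -- sum over k of probabilities is 1
  have hsum1 : ∀ i, ∑ k, Pr k i = 1 := by
    intro i
    have h1 : ∫ ω, (∑ k, B k i ω) ∂μ = 1 := by
      rw [integral_congr_ae (hexcl i)]; simp
    rw [integral_finset_sum _ (fun k _ => hint k i)] at h1
    simpa [hEB] using h1
  -- the random variables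
  set X : Fin (p + 1) → Ω → ℝ := fun k ω => (1 / (M : ℝ)) * ∑ i, B k i ω with hXdef
  have hXmem : ∀ k, MemLp (X k) 2 μ := by
    intro k
    have h := (memLp_finset_sum' univ (fun i _ => memLp_of01 μ (hmeas k i) (h01 k i) 2)).const_mul (1 / (M : ℝ))
    have he : X k = fun ω => (1 / (M : ℝ)) * (∑ i ∈ univ, B k i) ω := by
      funext ω; simp [hXdef]
    rw [he]; exact h
  have hEX : ∀ k, ∫ ω, X k ω ∂μ = (1 / (M : ℝ)) * ∑ i, Pr k i := by
    intro k
    simp only [hXdef]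
    rw [integral_const_mul, integral_finset_sum _ (fun i _ => hint k i)]
    simp [hEB]
  have hEX2 : ∀ k, ∫ ω, (X k ^ 2) ω ∂μ = (1 / (M : ℝ)) ^ 2 * ∑ i, ∑ j, Q k i j := by
    intro k
    have hpt : ∀ ω, (X k ^ 2) ω = (1 / (M : ℝ)) ^ 2 * ∑ i, ∑ j, B k i ω * B k j ω := by
      intro ω
      simp only [Pi.pow_apply, hXdef]
      rw [mul_pow, sq (∑ i, B k i ω), Finset.sum_mul_sum]
    rw [integral_congr_ae (Filter.Eventually.of_forall hpt), integral_const_mul,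
      integral_finset_sum _ (fun i _ => integrable_finset_sum _ (fun j _ => hintmul k i j))]
    congr 1
    refine Finset.sum_congr rfl fun i _ => ?_
    rw [integral_finset_sum _ (fun j _ => hintmul k i j)]
    exact Finset.sum_congr rfl fun j _ => hEBB k i j
  have hVar : ∀ k, ProbabilityTheory.variance (X k) μ =
      (1 / (M : ℝ)) ^ 2 * ((∑ i, ∑ j, Q k i j) - (∑ i, Pr k i) ^ 2) := by
    intro k
    rw [ProbabilityTheory.variance_eq_sub (hXmem k), hEX2, hEX]
    ring
  -- Chebyshev + union bound
  set Δ : ℝ := (1 / (M : ℝ)) * ∑ i : Fin M, ∑ k : Fin (p + 1),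
      Pr k i * ∑ j ∈ Finset.univ.erase i, (Q k j i / Pr k i - Pr k j) with hΔdef
  have hcheb : ∀ k, μ {ω | t ≤ |X k ω - ∫ ω', X k ω' ∂μ|} ≤
      ENNReal.ofReal (ProbabilityTheory.variance (X k) μ / t ^ 2) :=
    fun k => ProbabilityTheory.meas_ge_le_variance_div_sq (hXmem k) ht
  have hsetU : {ω | ∃ k : Fin (p + 1), t ≤ |X k ω - ∫ ω', X k ω' ∂μ|} =
      ⋃ k, {ω | t ≤ |X k ω - ∫ ω', X k ω' ∂μ|} := Set.setOf_exists _
  have hstep1 : (μ {ω | ∃ k : Fin (p + 1), t ≤ |X k ω - ∫ ω', X k ω' ∂μ|}).toReal ≤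
      ∑ k, ProbabilityTheory.variance (X k) μ / t ^ 2 := by
    have h1 : μ {ω | ∃ k : Fin (p + 1), t ≤ |X k ω - ∫ ω', X k ω' ∂μ|} ≤
        ∑ k, ENNReal.ofReal (ProbabilityTheory.variance (X k) μ / t ^ 2) := by
      rw [hsetU]
      exact (measure_iUnion_fintype_le _ _).trans (Finset.sum_le_sum fun k _ => hcheb k)
    have h2 : (∑ k, ENNReal.ofReal (ProbabilityTheory.variance (X k) μ / t ^ 2)) =
        ENNReal.ofReal (∑ k, ProbabilityTheory.variance (X k) μ / t ^ 2) := by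
      rw [ENNReal.ofReal_sum_of_nonneg]
      intro k _
      exact div_nonneg (ProbabilityTheory.variance_nonneg _ _) (by positivity)
    have h3 := ENNReal.toReal_mono (by simp [h2]) h1
    rwa [h2, ENNReal.toReal_ofReal (Finset.sum_nonneg fun k _ =>
      div_nonneg (ProbabilityTheory.variance_nonneg _ _) (by positivity))] at h3
  -- key ProbabilityTheory.variance sum bound
  have hMΔ : (M : ℝ) * Δ = ∑ i, ∑ k, ∑ j ∈ Finset.univ.erase i, (Q k i j - Pr k i * Pr k j) := by
    rw [hΔdef, ← mul_assoc, mul_one_div, div_self hM0, one_mul]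
    refine Finset.sum_congr rfl fun i _ => Finset.sum_congr rfl fun k _ => ?_
    rw [Finset.mul_sum]
    refine Finset.sum_congr rfl fun j _ => ?_
    rw [mul_sub, mul_div_cancel₀ _ (hpos k i).ne', hQsymm k j i]
  have hvarsum : ∑ k, ProbabilityTheory.variance (X k) μ ≤ (1 + Δ) / M := by
    have hsplit : ∀ k, (∑ i, ∑ j, Q k i j) - (∑ i, Pr k i) ^ 2 =
        ∑ i, ((Pr k i - Pr k i ^ 2) +
          ∑ j ∈ Finset.univ.erase i, (Q k i j - Pr k i * Pr k j)) := by
      intro k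
      have h1 : ∀ i : Fin M, ∑ j, Q k i j =
          Q k i i + ∑ j ∈ Finset.univ.erase i, Q k i j :=
        fun i => (Finset.add_sum_erase _ _ (Finset.mem_univ i)).symm
      have h2 : ∀ i : Fin M, ∑ j, Pr k i * Pr k j =
          Pr k i * Pr k i + ∑ j ∈ Finset.univ.erase i, Pr k i * Pr k j :=
        fun i => (Finset.add_sum_erase _ _ (Finset.mem_univ i)).symm
      have h3 : (∑ i, Pr k i) ^ 2 = ∑ i, ∑ j, Pr k i * Pr k j := by
        rw [sq, Finset.sum_mul_sum]
      rw [h3, ← Finset.sum_sub_distrib]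
      refine Finset.sum_congr rfl fun i _ => ?_
      rw [h1 i, h2 i, hQii k i, Finset.sum_sub_distrib]
      ring
    have hbound : ∑ k, ((1 / (M : ℝ)) ^ 2 * ((∑ i, ∑ j, Q k i j) - (∑ i, Pr k i) ^ 2)) ≤
        (1 / (M : ℝ)) ^ 2 * ((M : ℝ) + (M : ℝ) * Δ) := by
      rw [← Finset.mul_sum]
      refine mul_le_mul_of_nonneg_left ?_ (by positivity)
      simp_rw [hsplit, Finset.sum_add_distrib]
      have hA : ∑ k, ∑ i, (Pr k i - Pr k i ^ 2) ≤ (M : ℝ) := by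
        have : ∑ k, ∑ i, (Pr k i - Pr k i ^ 2) ≤ ∑ k, ∑ i : Fin M, Pr k i := by
          refine Finset.sum_le_sum fun k _ => Finset.sum_le_sum fun i _ => ?_
          nlinarith [sq_nonneg (Pr k i)]
        refine this.trans ?_
        rw [Finset.sum_comm]
        simp [hsum1]
      have hB : ∑ k, ∑ i, ∑ j ∈ Finset.univ.erase i, (Q k i j - Pr k i * Pr k j)
          = (M : ℝ) * Δ := by
        rw [hMΔ, Finset.sum_comm]
      linarith [hA, hB.le, hB.ge]
    calc ∑ k, ProbabilityTheory.variance (X k) μ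
        = ∑ k, ((1 / (M : ℝ)) ^ 2 * ((∑ i, ∑ j, Q k i j) - (∑ i, Pr k i) ^ 2)) := by
          exact Finset.sum_congr rfl fun k _ => hVar k
      _ ≤ (1 / (M : ℝ)) ^ 2 * ((M : ℝ) + (M : ℝ) * Δ) := hbound
      _ = (1 + Δ) / M := by field_simp
  -- conclude
  refine hstep1.trans ?_
  rw [← Finset.sum_div]
  rw [div_le_div_iff₀ (by positivity) (by positivity)]
  calc (∑ k, ProbabilityTheory.variance (X k) μ) * ((M : ℝ) * t ^ 2)
      ≤ ((1 + Δ) / M) * ((M : ℝ) * t ^ 2) := by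
        exact mul_le_mul_of_nonneg_right hvarsum (by positivity)
    _ = (1 + Δ) * t ^ 2 := by field_simp
end

section
/- Under the setup of Definition 2 (mutually exclusive Bernoulli events), the quantity Δ_N is bounded above by (1/M) Σ_{i=1}^M Σ_{j≠i} E[ d_TV(π_{j|i}^{B_i}, π_j) ], where π_j is the marginal distribution of the vector B_j := (B_{0,j},…,B_{p,j}), π_{j|i}^{b} is the conditional distribution of B_j given B_i = b, and d_TV is total variation distance. -/
open MeasureTheory Finset

def vecEq {Ω : Type*} {p M : ℕ} (B : Fin (p + 1) → Fin M → Ω → ℝ) (i : Fin M)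
    (b : Fin (p + 1) → Bool) : Set Ω :=
  {ω | ∀ k : Fin (p + 1), B k i ω = if b k then 1 else 0}

def ev {p : ℕ} (k : Fin (p + 1)) : Fin (p + 1) → Bool := fun l => decide (l = k)

lemma ev_inj {p : ℕ} : Function.Injective (ev (p := p)) := by
  intro k k' h
  have := congrFun h k
  simpa [ev] using this

lemma vecEq_measurable {Ω : Type*} [MeasurableSpace Ω] {p M : ℕ}
    (B : Fin (p + 1) → Fin M → Ω → ℝ) (hmeas : ∀ k i, Measurable (B k i))
    (i : Fin M) (b : Fin (p + 1) → Bool) : MeasurableSet (vecEq B i b) := by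
  have : vecEq B i b = ⋂ k, (B k i) ⁻¹' {if b k then 1 else 0} := by
    ext ω; simp [vecEq, Set.mem_iInter]
  rw [this]
  exact MeasurableSet.iInter fun k => (hmeas k i) (measurableSet_singleton _)

lemma eq_one_iff {Ω : Type*} {p M : ℕ} (B : Fin (p + 1) → Fin M → Ω → ℝ)
    (h01 : ∀ k i ω, B k i ω = 0 ∨ B k i ω = 1) (i : Fin M) (k : Fin (p + 1)) (ω : Ω)
    (hsum : ∑ l : Fin (p + 1), B l i ω = 1) :
    B k i ω = 1 ↔ ω ∈ vecEq B i (ev k) := by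
  constructor
  · intro hk l
    by_cases hlk : l = k
    · simp [ev, hlk, hk]
    · simp only [ev, hlk, decide_false, if_false]
      rcases h01 l i ω with h | h
      · exact h
      · exfalso
        have hsub : ({k, l} : Finset (Fin (p + 1))) ⊆ univ := subset_univ _
        have h2 : ∑ m ∈ ({k, l} : Finset (Fin (p + 1))), B m i ω ≤
            ∑ m : Fin (p + 1), B m i ω := by
          apply Finset.sum_le_sum_of_subset_of_nonneg hsub
          intro m _ _
          rcases h01 m i ω with h' | h' <;> simp [h']
        rw [Finset.sum_pair (fun hc => hlk hc.symm)] at h2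
        rw [hsum, hk, h] at h2
        linarith
  · intro hω
    have := hω k
    simpa [ev] using this

lemma partition_sum {Ω : Type*} [MeasurableSpace Ω] (μ : Measure Ω) [IsFiniteMeasure μ]
    {p M : ℕ} (B : Fin (p + 1) → Fin M → Ω → ℝ)
    (hmeas : ∀ k i, Measurable (B k i))
    (h01 : ∀ k i ω, B k i ω = 0 ∨ B k i ω = 1)
    (j : Fin M) (A : Set Ω) (hA : MeasurableSet A) :
    ∑ c : Fin (p + 1) → Bool, (μ (vecEq B j c ∩ A)).toReal = (μ A).toReal := by
  classical
  have hcover : A = ⋃ c ∈ (Finset.univ : Finset (Fin (p + 1) → Bool)), (vecEq B j c ∩ A) := by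
    ext ω
    simp only [Set.mem_iUnion, Set.mem_inter_iff, Finset.mem_univ, exists_true_left,
      exists_prop, true_and]
    constructor
    · intro hω
      refine ⟨fun k => if B k j ω = 1 then true else false, ?_, hω⟩
      intro k
      rcases h01 k j ω with h | h <;> simp [h]
    · rintro ⟨c, _, hω⟩; exact hω
  have hdisj : ((Finset.univ : Finset (Fin (p + 1) → Bool)) : Set (Fin (p + 1) → Bool)).PairwiseDisjoint
      (fun c => vecEq B j c ∩ A) := by
    intro c _ c' _ hcc
    apply Set.disjoint_left.mpr
    rintro ω ⟨h1, _⟩ ⟨h2, _⟩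
    apply hcc
    funext k
    have e1 := h1 k
    have e2 := h2 k
    by_contra hk
    rcases Bool.eq_false_or_eq_true (c k) with hc | hc <;>
      rcases Bool.eq_false_or_eq_true (c' k) with hc' | hc' <;>
        simp [hc, hc'] at e1 e2 hk <;> rw [e1] at e2 <;> norm_num at e2
  have hmeq : μ A = ∑ c : Fin (p + 1) → Bool, μ (vecEq B j c ∩ A) := by
    conv_lhs => rw [hcover]
    exact measure_biUnion_finset hdisj fun c _ => (vecEq_measurable B hmeas j c).inter hA
  rw [hmeq, ENNReal.toReal_sum fun c _ => measure_ne_top μ _]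

lemma key_tv {ι : Type*} [Fintype ι] (a : ι → ℝ) (b : ι) (hsum : ∑ c, a c = 0) :
    a b ≤ (1 / 2) * ∑ c, |a c| := by
  classical
  have h1 : a b + ∑ c ∈ univ.erase b, a c = 0 := by
    rw [Finset.add_sum_erase _ a (mem_univ b)]; exact hsum
  have h2 : - ∑ c ∈ univ.erase b, a c ≤ ∑ c ∈ univ.erase b, |a c| := by
    rw [← Finset.sum_neg_distrib]
    exact Finset.sum_le_sum fun c _ => neg_le_abs _
  have h3 : a b ≤ |a b| := le_abs_self _
  have h4 : ∑ c, |a c| = |a b| + ∑ c ∈ univ.erase b, |a c| :=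
    (Finset.add_sum_erase _ (fun c => |a c|) (mem_univ b)).symm
  linarith

/-- Δ_N ≤ (1/M) Σ_i Σ_{j≠i} E[d_TV(π_{j|i}^{B_i}, π_j)], where the
expectation over the random value of B_i is written as the sum over vectors b of
P(B_i = b) times the total variation distance between the conditional law of B_j
given B_i = b and the marginal law of B_j. -/
theorem stmt_6 {Ω : Type*} [MeasurableSpace Ω] (μ : Measure Ω) [IsProbabilityMeasure μ]
    (p M : ℕ) (hM : 0 < M)
    (B : Fin (p + 1) → Fin M → Ω → ℝ)
    (hmeas : ∀ k i, Measurable (B k i))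
    (h01 : ∀ k i ω, B k i ω = 0 ∨ B k i ω = 1)
    (hexcl : ∀ i, ∀ᵐ ω ∂μ, ∑ k : Fin (p + 1), B k i ω = 1)
    (hpos : ∀ k i, 0 < (μ {ω | B k i ω = 1}).toReal) :
    (1 / (M : ℝ)) * ∑ i : Fin M, ∑ k : Fin (p + 1),
        (μ {ω | B k i ω = 1}).toReal *
          ∑ j ∈ Finset.univ.erase i,
            ((μ ({ω | B k j ω = 1} ∩ {ω | B k i ω = 1})).toReal
                / (μ {ω | B k i ω = 1}).toReal
              - (μ {ω | B k j ω = 1}).toReal) ≤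
      (1 / (M : ℝ)) * ∑ i : Fin M, ∑ j ∈ Finset.univ.erase i,
        ∑ b : Fin (p + 1) → Bool,
          (μ (vecEq B i b)).toReal *
            ((1 / 2) * ∑ c : Fin (p + 1) → Bool,
              |(μ (vecEq B j c ∩ vecEq B i b)).toReal / (μ (vecEq B i b)).toReal
                - (μ (vecEq B j c)).toReal|) := by
  classical
  have hae : ∀ (i : Fin M) (k : Fin (p + 1)),
      {ω | B k i ω = 1} =ᵐ[μ] vecEq B i (ev k) := by
    intro i k
    rw [Filter.eventuallyEq_set]
    filter_upwards [hexcl i] with ω hω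
    exact eq_one_iff B h01 i k ω hω
  have hq : ∀ (i : Fin M) (k : Fin (p + 1)),
      (μ {ω | B k i ω = 1}).toReal = (μ (vecEq B i (ev k))).toReal := by
    intro i k; rw [measure_congr (hae i k)]
  have hr : ∀ (i j : Fin M) (k : Fin (p + 1)),
      (μ ({ω | B k j ω = 1} ∩ {ω | B k i ω = 1})).toReal
        = (μ (vecEq B j (ev k) ∩ vecEq B i (ev k))).toReal := by
    intro i j k; rw [measure_congr ((hae j k).inter (hae i k))]
  apply mul_le_mul_of_nonneg_left ?_ (by positivity)
  apply Finset.sum_le_sum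
  intro i _
  have rearr : ∑ k : Fin (p + 1), (μ {ω | B k i ω = 1}).toReal *
          ∑ j ∈ Finset.univ.erase i,
            ((μ ({ω | B k j ω = 1} ∩ {ω | B k i ω = 1})).toReal
                / (μ {ω | B k i ω = 1}).toReal
              - (μ {ω | B k j ω = 1}).toReal)
      = ∑ j ∈ Finset.univ.erase i, ∑ k : Fin (p + 1),
          (μ {ω | B k i ω = 1}).toReal *
            ((μ ({ω | B k j ω = 1} ∩ {ω | B k i ω = 1})).toReal
                / (μ {ω | B k i ω = 1}).toReal
              - (μ {ω | B k j ω = 1}).toReal) := by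
    simp_rw [Finset.mul_sum]
    rw [Finset.sum_comm]
  rw [rearr]
  apply Finset.sum_le_sum
  intro j _
  -- fixed i, j
  set q : (Fin (p + 1) → Bool) → ℝ := fun b => (μ (vecEq B i b)).toReal with hqdef
  set s : (Fin (p + 1) → Bool) → ℝ := fun c => (μ (vecEq B j c)).toReal with hsdef
  set r : (Fin (p + 1) → Bool) → (Fin (p + 1) → Bool) → ℝ :=
    fun b c => (μ (vecEq B j c ∩ vecEq B i b)).toReal with hrdef
  have hsumr : ∀ b, ∑ c, r b c = q b := fun b =>
    partition_sum μ B hmeas h01 j _ (vecEq_measurable B hmeas i b)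
  have hsums : ∑ c, s c = 1 := by
    have := partition_sum μ B hmeas h01 j Set.univ MeasurableSet.univ
    simpa [hsdef] using this
  have step1 : ∀ k : Fin (p + 1),
      (μ {ω | B k i ω = 1}).toReal *
        ((μ ({ω | B k j ω = 1} ∩ {ω | B k i ω = 1})).toReal
            / (μ {ω | B k i ω = 1}).toReal
          - (μ {ω | B k j ω = 1}).toReal)
      ≤ q (ev k) * ((1 / 2) * ∑ c, |r (ev k) c / q (ev k) - s c|) := by
    intro k
    have hqpos : 0 < q (ev k) := by
      have h := hpos k i
      rw [hq i k] at h
      exact h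
    rw [hq i k, hr i j k, hq j k]
    apply mul_le_mul_of_nonneg_left ?_ hqpos.le
    have hzero : ∑ c, (r (ev k) c / q (ev k) - s c) = 0 := by
      rw [Finset.sum_sub_distrib, ← Finset.sum_div, hsumr, hsums,
        div_self hqpos.ne']
      ring
    exact key_tv (fun c => r (ev k) c / q (ev k) - s c) (ev k) hzero
  calc ∑ k : Fin (p + 1), (μ {ω | B k i ω = 1}).toReal *
          ((μ ({ω | B k j ω = 1} ∩ {ω | B k i ω = 1})).toReal
              / (μ {ω | B k i ω = 1}).toReal
            - (μ {ω | B k j ω = 1}).toReal)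
      ≤ ∑ k : Fin (p + 1), q (ev k) * ((1 / 2) * ∑ c, |r (ev k) c / q (ev k) - s c|) :=
        Finset.sum_le_sum fun k _ => step1 k
    _ = ∑ b ∈ Finset.univ.image ev, q b * ((1 / 2) * ∑ c, |r b c / q b - s c|) :=
        (Finset.sum_image (f := fun b => q b * ((1 / 2) * ∑ c, |r b c / q b - s c|))
          (g := ev) (fun k _ k' _ h => ev_inj h)).symm
    _ ≤ ∑ b : Fin (p + 1) → Bool, q b * ((1 / 2) * ∑ c, |r b c / q b - s c|) := by
        apply Finset.sum_le_sum_of_subset_of_nonneg (subset_univ _)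
        intro b _ _
        have : 0 ≤ q b := ENNReal.toReal_nonneg
        positivity
end

section
/- Let B_1, …, B_M be {0,1}-valued random variables, F̂ := (1/M) Σ_{i=1}^M B_i, and let Ξ_m be the martingale differences of E[F̂ | σ(B_1,…,B_m)] with respect to the natural filtration. Then for each m, the essential supremum of |E[F̂ | F_m] − E[F̂ | F_{m−1}]| is at most (1/M)(1 + Σ_{i=m+1}^M δ_{m,i}), where δ_{m,i} is the maximal total variation distance between the conditional laws of B_i given (B_1,…,B_m) = b versus (B_1,…,B_m) = b′ over all pairs b, b′ ∈ {0,1}^m agreeing in the first m−1 coordinates. -/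
set_option linter.unusedSectionVars false

set_option maxHeartbeats 1000000
open MeasureTheory Finset

/-- The σ-field generated by the first m of the Bernoulli variables B_1,…,B_M. -/
def natFiltration {Ω : Type*} {M : ℕ} (B : Fin M → Ω → ℝ) (m : ℕ) :
    MeasurableSpace Ω :=
  MeasurableSpace.comap (fun ω (t : {t : Fin M // (t : ℕ) < m}) => B t ω)
    inferInstance

/-- The event that the first m of B_1,…,B_M take the 0-1 values encoded by
b : Fin M → Bool. -/
def prefixEq {Ω : Type*} {M : ℕ} (B : Fin M → Ω → ℝ) (m : ℕ)
    (b : Fin M → Bool) : Set Ω :=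
  {ω | ∀ t : Fin M, (t : ℕ) < m → B t ω = if b t then 1 else 0}

/-- The conditional law P_{m,i}^b(v) = P(B_i = v | (B_1,…,B_m) = b). -/
noncomputable def condLaw {Ω : Type*} [MeasurableSpace Ω] (μ : Measure Ω)
    {M : ℕ} (B : Fin M → Ω → ℝ) (m : ℕ) (i : Fin M) (b : Fin M → Bool)
    (v : Bool) : ℝ :=
  (μ ({ω | B i ω = if v then 1 else 0} ∩ prefixEq B m b)).toReal
    / (μ (prefixEq B m b)).toReal

/-- δ_{m,i}: the maximal total variation distance between the conditional laws of
B_i given (B_1,…,B_m) = b versus b′, over pairs b, b′ agreeing in the first m−1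
coordinates. -/
noncomputable def deltaTV {Ω : Type*} [MeasurableSpace Ω] (μ : Measure Ω)
    {M : ℕ} (B : Fin M → Ω → ℝ) (m : ℕ) (i : Fin M) : ℝ :=
  ⨆ bb : {q : (Fin M → Bool) × (Fin M → Bool) //
      ∀ t : Fin M, (t : ℕ) + 1 < m → q.1 t = q.2 t},
    (1 / 2) * ∑ v : Bool, |condLaw μ B m i bb.1.1 v - condLaw μ B m i bb.1.2 v|

section Aux

variable {Ω : Type*} [MeasurableSpace Ω]

/-- The boolean pattern of a sample point. -/
noncomputable def betaB {M : ℕ} (B : Fin M → Ω → ℝ) (ω : Ω) (t : Fin M) : Bool :=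
  @decide (B t ω = 1) (Classical.propDecidable _)

/-- Canonical truncation of a boolean vector. -/
noncomputable def truncB (M m : ℕ) (b : Fin M → Bool) : Fin M → Bool :=
  fun t => if (t : ℕ) < m then b t else false

/-- Canonical representatives of the atoms of the m-th σ-field. -/
def canonSet (M m : ℕ) : Finset (Fin M → Bool) :=
  Finset.univ.filter (fun b => ∀ t : Fin M, m ≤ (t : ℕ) → b t = false)

variable {M : ℕ} {B : Fin M → Ω → ℝ}

lemma betaB_true {t : Fin M} {ω : Ω} (h : B t ω = 1) : betaB B ω t = true := by
  unfold betaB; exact decide_eq_true h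

lemma betaB_false {t : Fin M} {ω : Ω} (h : B t ω = 0) : betaB B ω t = false := by
  unfold betaB; exact decide_eq_false (by rw [h]; norm_num)

lemma B_eq_ite (h01 : ∀ i ω, B i ω = 0 ∨ B i ω = 1) (t : Fin M) (ω : Ω) :
    B t ω = if betaB B ω t then 1 else 0 := by
  rcases h01 t ω with h | h
  · rw [betaB_false h, if_neg (by simp), h]
  · rw [betaB_true h, if_pos rfl, h]

lemma mem_prefixEq (h01 : ∀ i ω, B i ω = 0 ∨ B i ω = 1) {m : ℕ} {b : Fin M → Bool}
    {ω : Ω} : ω ∈ prefixEq B m b ↔ ∀ t : Fin M, (t : ℕ) < m → betaB B ω t = b t := by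
  constructor
  · intro h t ht
    have hb := h t ht
    cases hbt : b t with
    | true => rw [hbt, if_pos rfl] at hb; exact betaB_true hb
    | false => rw [hbt, if_neg (by simp)] at hb; exact betaB_false hb
  · intro h t ht
    show B t ω = _
    rw [B_eq_ite h01 t ω, h t ht]

lemma prefixEq_congr {m : ℕ} {b b' : Fin M → Bool}
    (h : ∀ t : Fin M, (t : ℕ) < m → b t = b' t) :
    prefixEq B m b = prefixEq B m b' :=
  Set.ext fun ω => forall_congr' fun t => imp_congr_right fun ht => by rw [h t ht]

lemma condLaw_congr (μ : Measure Ω) {m : ℕ} {i : Fin M} {b b' : Fin M → Bool}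
    (h : ∀ t : Fin M, (t : ℕ) < m → b t = b' t) (v : Bool) :
    condLaw μ B m i b v = condLaw μ B m i b' v := by
  unfold condLaw; rw [prefixEq_congr h]

lemma self_mem_prefixEq (h01 : ∀ i ω, B i ω = 0 ∨ B i ω = 1) (m : ℕ) (ω : Ω) :
    ω ∈ prefixEq B m (betaB B ω) :=
  (mem_prefixEq h01).2 fun _ _ => rfl

lemma truncB_mem_canonSet (m : ℕ) (b : Fin M → Bool) : truncB M m b ∈ canonSet M m := by
  unfold canonSet
  rw [Finset.mem_filter]
  exact ⟨Finset.mem_univ _, fun t ht => if_neg (by omega)⟩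

lemma self_mem_prefixEq_trunc (h01 : ∀ i ω, B i ω = 0 ∨ B i ω = 1) (m : ℕ) (ω : Ω) :
    ω ∈ prefixEq B m (truncB M m (betaB B ω)) :=
  (mem_prefixEq h01).2 fun t ht => by simp [truncB, ht]

lemma eq_trunc_of_mem (h01 : ∀ i ω, B i ω = 0 ∨ B i ω = 1) {m : ℕ}
    {b : Fin M → Bool} (hb : b ∈ canonSet M m) {ω : Ω} (hω : ω ∈ prefixEq B m b) :
    b = truncB M m (betaB B ω) := by
  unfold canonSet at hb
  rw [Finset.mem_filter] at hb
  funext t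
  by_cases ht : (t : ℕ) < m
  · rw [truncB, if_pos ht, (mem_prefixEq h01).1 hω t ht]
  · rw [truncB, if_neg ht, hb.2 t (by omega)]

/-- The map generating the m-th σ-field. -/
def phiB (B : Fin M → Ω → ℝ) (m : ℕ) (ω : Ω) : {t : Fin M // (t : ℕ) < m} → ℝ :=
  fun t => B t ω

lemma natFiltration_le (hmeas : ∀ i, Measurable (B i)) (m : ℕ) :
    natFiltration B m ≤ (inferInstance : MeasurableSpace Ω) :=
  Measurable.comap_le (measurable_pi_lambda _ fun t => hmeas t)

lemma measurableSet_prefixEq_filt (m : ℕ) (b : Fin M → Bool) :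
    MeasurableSet[natFiltration B m] (prefixEq B m b) := by
  rw [natFiltration, MeasurableSpace.measurableSet_comap]
  refine ⟨{p | ∀ t : {t : Fin M // (t : ℕ) < m}, p t = if b t then 1 else 0}, ?_, ?_⟩
  · have : {p : {t : Fin M // (t : ℕ) < m} → ℝ |
        ∀ t, p t = if b t then 1 else 0} =
        ⋂ t : {t : Fin M // (t : ℕ) < m}, (fun p => p t) ⁻¹' {(if b t then 1 else 0 : ℝ)} := by
      ext p; simp [Set.mem_iInter]
    rw [this]
    exact MeasurableSet.iInter fun t =>
      (measurable_pi_apply t) (measurableSet_singleton _)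
  · ext ω
    constructor
    · intro h t ht
      exact h ⟨t, ht⟩
    · intro h t
      exact h t t.2

lemma measurableSet_prefixEq (hmeas : ∀ i, Measurable (B i)) (m : ℕ) (b : Fin M → Bool) :
    MeasurableSet (prefixEq B m b) :=
  natFiltration_le hmeas m _ (measurableSet_prefixEq_filt m b)

lemma phiB_const_on_atom {m : ℕ} {b : Fin M → Bool} {ω ω' : Ω}
    (h : ω ∈ prefixEq B m b) (h' : ω' ∈ prefixEq B m b) :
    phiB B m ω = phiB B m ω' := by
  funext t
  show B t ω = B t ω'
  rw [h t t.2, h' t t.2]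

lemma atom_subset_or_disjoint {m : ℕ} {s : Set Ω}
    (hs : MeasurableSet[natFiltration B m] s) (b : Fin M → Bool) :
    prefixEq B m b ⊆ s ∨ prefixEq B m b ∩ s = ∅ := by
  rw [natFiltration, MeasurableSpace.measurableSet_comap] at hs
  obtain ⟨T, -, rfl⟩ := hs
  by_cases h : prefixEq B m b ∩ (phiB B m) ⁻¹' T = ∅
  · exact Or.inr h
  · left
    rw [Set.eq_empty_iff_forall_notMem] at h
    push_neg at h
    obtain ⟨ω0, hω0, hω0T⟩ := h
    intro ω hω
    show phiB B m ω ∈ T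
    rw [phiB_const_on_atom hω hω0]
    exact hω0T

end Aux

section Aux2

variable {Ω : Type*} [MeasurableSpace Ω] {M : ℕ} {B : Fin M → Ω → ℝ}

lemma atoms_disjoint (h01 : ∀ i ω, B i ω = 0 ∨ B i ω = 1) {m : ℕ}
    {b b' : Fin M → Bool} (hb : b ∈ canonSet M m) (hb' : b' ∈ canonSet M m)
    (hne : b ≠ b') : Disjoint (prefixEq B m b) (prefixEq B m b') := by
  rw [Set.disjoint_left]
  intro ω hω hω'
  exact hne ((eq_trunc_of_mem h01 hb hω).trans (eq_trunc_of_mem h01 hb' hω').symm)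

lemma B_eq_indicator (h01 : ∀ i ω, B i ω = 0 ∨ B i ω = 1) (i : Fin M) :
    B i = Set.indicator {ω | B i ω = 1} (fun _ => (1 : ℝ)) := by
  funext ω
  rcases h01 i ω with h | h
  · rw [Set.indicator_of_notMem (by simp [Set.mem_setOf_eq, h]), h]
  · rw [Set.indicator_of_mem (by exact h), h]

lemma measurableSet_Beq (hmeas : ∀ i, Measurable (B i)) (i : Fin M) (c : ℝ) :
    MeasurableSet {ω | B i ω = c} :=
  (hmeas i) (measurableSet_singleton c)

lemma integrable_B (μ : Measure Ω) [IsFiniteMeasure μ]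
    (hmeas : ∀ i, Measurable (B i)) (h01 : ∀ i ω, B i ω = 0 ∨ B i ω = 1)
    (i : Fin M) : Integrable (B i) μ := by
  rw [B_eq_indicator h01 i]
  exact (integrable_const 1).indicator (measurableSet_Beq hmeas i 1)

lemma setIntegral_B (μ : Measure Ω) [IsFiniteMeasure μ]
    (hmeas : ∀ i, Measurable (B i)) (h01 : ∀ i ω, B i ω = 0 ∨ B i ω = 1)
    (i : Fin M) {s : Set Ω} (_hs : MeasurableSet s) :
    ∫ ω in s, B i ω ∂μ = (μ ({ω | B i ω = 1} ∩ s)).toReal := by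
  have : ∫ ω in s, B i ω ∂μ
      = ∫ ω in s, Set.indicator {ω | B i ω = 1} (fun _ => (1:ℝ)) ω ∂μ := by
    refine integral_congr_ae (Filter.Eventually.of_forall fun ω => ?_)
    conv_lhs => rw [B_eq_indicator h01 i]
  rw [this, setIntegral_indicator (measurableSet_Beq hmeas i 1), setIntegral_const,
    Set.inter_comm, smul_eq_mul, mul_one, measureReal_def]

/-- The candidate for E[B_i | F_m]. -/
noncomputable def condE (μ : Measure Ω) (B : Fin M → Ω → ℝ) (m : ℕ) (i : Fin M) :
    Ω → ℝ :=
  fun ω => condLaw μ B m i (betaB B ω) true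

lemma condLaw_true_def (μ : Measure Ω) (m : ℕ) (i : Fin M) (b : Fin M → Bool) :
    condLaw μ B m i b true =
      (μ ({ω | B i ω = 1} ∩ prefixEq B m b)).toReal / (μ (prefixEq B m b)).toReal := by
  simp [condLaw]

lemma condLaw_false_def (μ : Measure Ω) (m : ℕ) (i : Fin M) (b : Fin M → Bool) :
    condLaw μ B m i b false =
      (μ ({ω | B i ω = 0} ∩ prefixEq B m b)).toReal / (μ (prefixEq B m b)).toReal := by
  simp [condLaw]

lemma condE_eq_sum (h01 : ∀ i ω, B i ω = 0 ∨ B i ω = 1) (μ : Measure Ω)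
    (m : ℕ) (i : Fin M) :
    condE μ B m i = fun ω => ∑ b ∈ canonSet M m,
      (prefixEq B m b).indicator (fun _ => condLaw μ B m i b true) ω := by
  funext ω
  have h1 : ∑ b ∈ canonSet M m,
      (prefixEq B m b).indicator (fun _ => condLaw μ B m i b true) ω
      = condLaw μ B m i (truncB M m (betaB B ω)) true := by
    rw [Finset.sum_eq_single (truncB M m (betaB B ω))]
    · rw [Set.indicator_of_mem (self_mem_prefixEq_trunc h01 m ω)]
    · intro b hb hne
      rw [Set.indicator_of_notMem]
      intro hmem
      exact hne (eq_trunc_of_mem h01 hb hmem)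
    · intro h
      exact absurd (truncB_mem_canonSet m _) h
  rw [h1]
  exact condLaw_congr μ (fun t ht => by simp [truncB, ht]) true

lemma stronglyMeasurable_condE (h01 : ∀ i ω, B i ω = 0 ∨ B i ω = 1)
    (μ : Measure Ω) (m : ℕ) (i : Fin M) :
    StronglyMeasurable[natFiltration B m] (condE μ B m i) := by
  rw [condE_eq_sum h01 μ m i]
  refine Measurable.stronglyMeasurable ?_
  exact Finset.measurable_sum _ fun b _ =>
    measurable_const.indicator (measurableSet_prefixEq_filt m b)

lemma integrable_condE (hmeas : ∀ i, Measurable (B i))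
    (h01 : ∀ i ω, B i ω = 0 ∨ B i ω = 1) (μ : Measure Ω) [IsFiniteMeasure μ]
    (m : ℕ) (i : Fin M) : Integrable (condE μ B m i) μ := by
  rw [condE_eq_sum h01 μ m i]
  exact integrable_finset_sum _ fun b _ =>
    (integrable_const _).indicator (measurableSet_prefixEq hmeas m b)

lemma condexp_B (μ : Measure Ω) [IsProbabilityMeasure μ]
    (hmeas : ∀ i, Measurable (B i)) (h01 : ∀ i ω, B i ω = 0 ∨ B i ω = 1)
    (m : ℕ) (i : Fin M) :
    μ[B i | natFiltration B m] =ᵐ[μ] condE μ B m i := by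
  have hle := natFiltration_le hmeas (B := B) m
  haveI : IsFiniteMeasure (μ.trim hle) := isFiniteMeasure_trim hle
  refine (ae_eq_condExp_of_forall_setIntegral_eq hle
    (integrable_B μ hmeas h01 i) ?_ ?_ ?_).symm
  · intro s _ _
    exact (integrable_condE hmeas h01 μ m i).integrableOn
  · intro s hs _
    have hsm : MeasurableSet s := hle _ hs
    rw [setIntegral_B μ hmeas h01 i hsm, condE_eq_sum h01 μ m i]
    rw [integral_finset_sum _ (fun b _ =>
      ((integrable_const _).indicator (measurableSet_prefixEq hmeas m b)).restrict)]
    have hterm : ∀ b ∈ canonSet M m,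
        ∫ ω in s, (prefixEq B m b).indicator (fun _ => condLaw μ B m i b true) ω ∂μ
        = (μ ({ω | B i ω = 1} ∩ (prefixEq B m b ∩ s))).toReal := by
      intro b _
      rw [setIntegral_indicator (measurableSet_prefixEq hmeas m b), setIntegral_const,
        smul_eq_mul, measureReal_def]
      rcases atom_subset_or_disjoint hs b with hsub | hdisj
      · rw [Set.inter_eq_right.mpr hsub, Set.inter_eq_left.mpr hsub,
          condLaw_true_def]
        by_cases h0 : (μ (prefixEq B m b)).toReal = 0
        · have : μ ({ω | B i ω = 1} ∩ prefixEq B m b) = 0 := by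
            have hle' : μ ({ω | B i ω = 1} ∩ prefixEq B m b) ≤ μ (prefixEq B m b) :=
              measure_mono Set.inter_subset_right
            have : μ (prefixEq B m b) = 0 := by
              have := ENNReal.toReal_eq_zero_iff (μ (prefixEq B m b))
              rcases this.mp h0 with h | h
              · exact h
              · exact absurd h (measure_ne_top μ _)
            exact le_antisymm (this ▸ hle') (zero_le)
          rw [h0, this]
          simp
        · rw [mul_comm, div_mul_cancel₀ _ h0]
      · have h1 : s ∩ prefixEq B m b = ∅ := by rw [Set.inter_comm]; exact hdisj
        rw [h1]
        have h2 : {ω | B i ω = 1} ∩ (prefixEq B m b ∩ s) = ∅ := by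
          rw [Set.inter_comm (prefixEq B m b) s, h1, Set.inter_empty]
        rw [h2]
        simp
    rw [Finset.sum_congr rfl hterm]
    have hcover : {ω | B i ω = 1} ∩ s =
        ⋃ b ∈ canonSet M m, ({ω | B i ω = 1} ∩ (prefixEq B m b ∩ s)) := by
      ext ω
      constructor
      · intro hω
        refine Set.mem_biUnion (truncB_mem_canonSet m (betaB B ω)) ?_
        exact ⟨hω.1, self_mem_prefixEq_trunc h01 m ω, hω.2⟩
      · rintro ⟨_, ⟨b, rfl⟩, hω⟩
        simp only [Set.mem_iUnion, Set.mem_inter_iff] at hω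
        obtain ⟨_, h1, _, h2⟩ := hω
        exact ⟨h1, h2⟩
    rw [hcover, measure_biUnion_finset ?_ ?_, ENNReal.toReal_sum
      (fun b _ => measure_ne_top μ _)]
    · intro b hb b' hb' hne
      exact (atoms_disjoint h01 hb hb' hne).mono
        (Set.inter_subset_right.trans Set.inter_subset_left)
        (Set.inter_subset_right.trans Set.inter_subset_left)
    · intro b _
      exact (measurableSet_Beq hmeas i 1).inter
        ((measurableSet_prefixEq hmeas m b).inter hsm)
  · exact (stronglyMeasurable_condE h01 μ m i).aestronglyMeasurable

lemma condexp_Fhat (μ : Measure Ω) [IsProbabilityMeasure μ]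
    (hmeas : ∀ i, Measurable (B i)) (h01 : ∀ i ω, B i ω = 0 ∨ B i ω = 1)
    (m : ℕ) :
    μ[(fun ω => (1 / (M : ℝ)) * ∑ i : Fin M, B i ω) | natFiltration B m] =ᵐ[μ]
      fun ω => (1 / (M : ℝ)) * ∑ i : Fin M, condE μ B m i ω := by
  have hfun : (fun ω => (1 / (M : ℝ)) * ∑ i : Fin M, B i ω)
      = (1 / (M : ℝ)) • (∑ i : Fin M, B i) := by
    funext ω
    simp [Finset.sum_apply, smul_eq_mul]
  rw [hfun]
  have h1 := condExp_smul (μ := μ) (m := natFiltration B m)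
    (1 / (M : ℝ)) (∑ i : Fin M, B i)
  have h2 := condExp_finsetSum (μ := μ) (m := natFiltration B m)
    (f := fun i : Fin M => B i) (s := Finset.univ)
    (fun i _ => integrable_B μ hmeas h01 i)
  have h3 : ∀ᵐ ω ∂μ, ∀ i : Fin M,
      (μ[B i | natFiltration B m]) ω = condE μ B m i ω :=
    ae_all_iff.2 fun i => condexp_B μ hmeas h01 m i
  filter_upwards [h1, h2, h3] with ω hω1 hω2 hω3
  rw [hω1]
  simp only [Pi.smul_apply, smul_eq_mul]
  congr 1
  rw [hω2]
  rw [Finset.sum_apply]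
  exact Finset.sum_congr rfl fun i _ => hω3 i

end Aux2

section Aux3

variable {Ω : Type*} [MeasurableSpace Ω] {M : ℕ} {B : Fin M → Ω → ℝ}

lemma condLaw_nonneg (μ : Measure Ω) (m : ℕ) (i : Fin M) (b : Fin M → Bool)
    (v : Bool) : 0 ≤ condLaw μ B m i b v :=
  div_nonneg ENNReal.toReal_nonneg ENNReal.toReal_nonneg

lemma condLaw_le_one (μ : Measure Ω) [IsFiniteMeasure μ] (m : ℕ) (i : Fin M)
    (b : Fin M → Bool) (v : Bool) : condLaw μ B m i b v ≤ 1 := by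
  unfold condLaw
  by_cases h0 : (μ (prefixEq B m b)).toReal = 0
  · rw [h0, div_zero]; norm_num
  · have hpos : 0 < (μ (prefixEq B m b)).toReal :=
      lt_of_le_of_ne ENNReal.toReal_nonneg (Ne.symm h0)
    rw [div_le_one hpos]
    exact ENNReal.toReal_mono (measure_ne_top μ _)
      (measure_mono Set.inter_subset_right)

lemma abs_condLaw_sub_le_one (μ : Measure Ω) [IsFiniteMeasure μ] {m m' : ℕ}
    (i : Fin M) (b b' : Fin M → Bool) (v : Bool) :
    |condLaw μ B m i b v - condLaw μ B m' i b' v| ≤ 1 := by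
  have h1 := condLaw_nonneg (B := B) μ m i b v
  have h2 := condLaw_le_one (B := B) μ m i b v
  have h3 := condLaw_nonneg (B := B) μ m' i b' v
  have h4 := condLaw_le_one (B := B) μ m' i b' v
  rw [abs_le]
  constructor <;> linarith

lemma bddAbove_deltaTV (μ : Measure Ω) [IsFiniteMeasure μ] (m : ℕ) (i : Fin M) :
    BddAbove (Set.range fun bb : {q : (Fin M → Bool) × (Fin M → Bool) //
      ∀ t : Fin M, (t : ℕ) + 1 < m → q.1 t = q.2 t} =>
      (1 / 2 : ℝ) * ∑ v : Bool, |condLaw μ B m i bb.1.1 v - condLaw μ B m i bb.1.2 v|) := by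
  refine ⟨1, ?_⟩
  rintro x ⟨bb, rfl⟩
  have hb : ∀ v : Bool, |condLaw μ B m i bb.1.1 v - condLaw μ B m i bb.1.2 v| ≤ 1 :=
    fun v => abs_condLaw_sub_le_one μ i _ _ v
  calc (1 / 2 : ℝ) * ∑ v : Bool, |condLaw μ B m i bb.1.1 v - condLaw μ B m i bb.1.2 v|
      ≤ (1 / 2 : ℝ) * ∑ _v : Bool, (1 : ℝ) := by
        refine mul_le_mul_of_nonneg_left (Finset.sum_le_sum fun v _ => hb v) (by norm_num)
    _ = 1 := by simp

lemma le_deltaTV (μ : Measure Ω) [IsFiniteMeasure μ] (m : ℕ) (i : Fin M)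
    {b b' : Fin M → Bool} (hagree : ∀ t : Fin M, (t : ℕ) + 1 < m → b t = b' t) :
    (1 / 2 : ℝ) * ∑ v : Bool, |condLaw μ B m i b v - condLaw μ B m i b' v|
      ≤ deltaTV μ B m i := by
  unfold deltaTV
  exact le_ciSup (bddAbove_deltaTV μ m i) ⟨(b, b'), hagree⟩

lemma deltaTV_nonneg (μ : Measure Ω) [IsFiniteMeasure μ] (m : ℕ) (i : Fin M) :
    0 ≤ deltaTV μ B m i := by
  have h := le_deltaTV (B := B) μ m i
    (b := fun _ => false) (b' := fun _ => false) (fun _ _ => rfl)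
  simpa using h

lemma condLaw_add_compl (μ : Measure Ω) [IsFiniteMeasure μ]
    (hmeas : ∀ i, Measurable (B i)) (h01 : ∀ i ω, B i ω = 0 ∨ B i ω = 1)
    (m : ℕ) (i : Fin M) (b : Fin M → Bool) (hb : μ (prefixEq B m b) ≠ 0) :
    condLaw μ B m i b true + condLaw μ B m i b false = 1 := by
  rw [condLaw_true_def, condLaw_false_def, ← add_div]
  have hunion : ({ω | B i ω = 1} ∩ prefixEq B m b)
      ∪ ({ω | B i ω = 0} ∩ prefixEq B m b) = prefixEq B m b := by
    ext ω
    simp only [Set.mem_union, Set.mem_inter_iff, Set.mem_setOf_eq]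
    constructor
    · rintro (⟨_, h⟩ | ⟨_, h⟩) <;> exact h
    · intro h
      rcases h01 i ω with h1 | h1
      · exact Or.inr ⟨h1, h⟩
      · exact Or.inl ⟨h1, h⟩
  have hdisj : Disjoint ({ω | B i ω = 1} ∩ prefixEq B m b)
      ({ω | B i ω = 0} ∩ prefixEq B m b) := by
    rw [Set.disjoint_left]
    rintro ω ⟨h1, _⟩ ⟨h2, _⟩
    rw [Set.mem_setOf_eq] at h1 h2
    rw [h1] at h2
    norm_num at h2
  have hm := measure_union (μ := μ) hdisj
    ((measurableSet_Beq hmeas i 0).inter (measurableSet_prefixEq hmeas m b))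
  rw [hunion] at hm
  rw [← ENNReal.toReal_add (measure_ne_top μ _) (measure_ne_top μ _), ← hm]
  exact div_self (ENNReal.toReal_ne_zero.mpr ⟨hb, measure_ne_top μ _⟩)

lemma condLaw_of_lt (μ : Measure Ω) [IsFiniteMeasure μ] {k : ℕ} {i : Fin M}
    (hik : (i : ℕ) < k) {b : Fin M → Bool} (hb : μ (prefixEq B k b) ≠ 0) :
    condLaw μ B k i b true = if b i then 1 else 0 := by
  rw [condLaw_true_def]
  cases hbi : b i with
  | true =>
    have hset : {ω | B i ω = 1} ∩ prefixEq B k b = prefixEq B k b := by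
      apply Set.inter_eq_right.mpr
      intro ω hω
      have h := hω i hik
      rw [hbi] at h
      simpa using h
    rw [hset, if_pos rfl,
      div_self (ENNReal.toReal_ne_zero.mpr ⟨hb, measure_ne_top μ _⟩)]
  | false =>
    have hset : {ω | B i ω = 1} ∩ prefixEq B k b = ∅ := by
      rw [Set.eq_empty_iff_forall_notMem]
      rintro ω ⟨h1, hω⟩
      have h := hω i hik
      rw [hbi] at h
      simp only [Bool.false_eq_true, if_false] at h
      rw [Set.mem_setOf_eq] at h1
      rw [h1] at h
      norm_num at h
    rw [hset]
    simp

end Aux3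

section Aux4

variable {Ω : Type*} [MeasurableSpace Ω] {M : ℕ} {B : Fin M → Ω → ℝ}

lemma prefixEq_mono {m : ℕ} (b : Fin M → Bool) :
    prefixEq B m b ⊆ prefixEq B (m - 1) b := by
  intro ω h t ht
  exact h t (by omega)

lemma prefix_split (h01 : ∀ i ω, B i ω = 0 ∨ B i ω = 1) {m : ℕ}
    (hm1 : 1 ≤ m) (hmM : m ≤ M) (b : Fin M → Bool) :
    prefixEq B (m - 1) b = prefixEq B m b ∪
      prefixEq B m (Function.update b ⟨m - 1, by omega⟩ (!(b ⟨m - 1, by omega⟩))) := by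
  set i₀ : Fin M := ⟨m - 1, by omega⟩ with hi₀
  ext ω
  rw [Set.mem_union, mem_prefixEq h01, mem_prefixEq h01, mem_prefixEq h01]
  constructor
  · intro h
    by_cases hc : betaB B ω i₀ = b i₀
    · left
      intro t ht
      by_cases ht' : (t : ℕ) < m - 1
      · exact h t ht'
      · have hti : t = i₀ := Fin.ext (show (t : ℕ) = m - 1 by omega)
        rw [hti]; exact hc
    · right
      intro t ht
      by_cases ht' : (t : ℕ) < m - 1
      · have hne : t ≠ i₀ := fun he => by
          have : (t : ℕ) = m - 1 := by rw [he]
          omega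
        rw [Function.update_of_ne hne]
        exact h t ht'
      · have hti : t = i₀ := Fin.ext (show (t : ℕ) = m - 1 by omega)
        rw [hti, Function.update_self]
        cases hbv : b i₀ <;> cases hβ : betaB B ω i₀ <;> simp_all
  · rintro (h | h) t ht
    · exact h t (by omega)
    · have hne : t ≠ i₀ := fun he => by
        have : (t : ℕ) = m - 1 := by rw [he]
        omega
      have h' := h t (by omega)
      rwa [Function.update_of_ne hne] at h'

lemma split_disjoint (h01 : ∀ i ω, B i ω = 0 ∨ B i ω = 1) {m : ℕ}
    (hm1 : 1 ≤ m) (hmM : m ≤ M) (b : Fin M → Bool) :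
    Disjoint (prefixEq B m b)
      (prefixEq B m (Function.update b ⟨m - 1, by omega⟩ (!(b ⟨m - 1, by omega⟩)))) := by
  set i₀ : Fin M := ⟨m - 1, by omega⟩ with hi₀
  rw [Set.disjoint_left]
  intro ω hω hω'
  have h1 := (mem_prefixEq h01).1 hω i₀ (show m - 1 < m by omega)
  have h2 := (mem_prefixEq h01).1 hω' i₀ (show m - 1 < m by omega)
  rw [Function.update_self] at h2
  rw [h1] at h2
  cases hbv : b i₀ <;> (rw [hbv] at h2; simp at h2)

lemma measure_split (hmeas : ∀ i, Measurable (B i))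
    (h01 : ∀ i ω, B i ω = 0 ∨ B i ω = 1) {m : ℕ} (hm1 : 1 ≤ m) (hmM : m ≤ M)
    (μ : Measure Ω) {S : Set Ω} (hS : MeasurableSet S) (b : Fin M → Bool) :
    μ (S ∩ prefixEq B (m - 1) b) = μ (S ∩ prefixEq B m b)
      + μ (S ∩ prefixEq B m (Function.update b ⟨m - 1, by omega⟩
          (!(b ⟨m - 1, by omega⟩)))) := by
  rw [prefix_split h01 hm1 hmM b, Set.inter_union_distrib_left]
  refine measure_union ?_ (hS.inter (measurableSet_prefixEq hmeas m _))
  exact (split_disjoint h01 hm1 hmM b).mono Set.inter_subset_right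
    Set.inter_subset_right

lemma ae_atom_pos (hmeas : ∀ i, Measurable (B i))
    (h01 : ∀ i ω, B i ω = 0 ∨ B i ω = 1) (μ : Measure Ω) (m : ℕ) :
    ∀ᵐ ω ∂μ, μ (prefixEq B m (betaB B ω)) ≠ 0 := by
  classical
  rw [ae_iff]
  have hsub : {ω | ¬ μ (prefixEq B m (betaB B ω)) ≠ 0} ⊆
      ⋃ b ∈ (canonSet M m).filter (fun b => μ (prefixEq B m b) = 0),
        prefixEq B m b := by
    intro ω hω
    simp only [Set.mem_setOf_eq, not_not] at hω
    refine Set.mem_iUnion₂.2 ⟨truncB M m (betaB B ω), ?_,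
      self_mem_prefixEq_trunc h01 m ω⟩
    rw [Finset.mem_filter]
    refine ⟨truncB_mem_canonSet m _, ?_⟩
    rw [← prefixEq_congr (b := betaB B ω) (b' := truncB M m (betaB B ω))
      (fun t ht => by simp [truncB, ht])]
    exact hω
  have hle := measure_biUnion_finset_le (μ := μ)
    ((canonSet M m).filter (fun b => μ (prefixEq B m b) = 0))
    (fun b => prefixEq B m b)
  have hz : ∑ b ∈ (canonSet M m).filter (fun b => μ (prefixEq B m b) = 0),
      μ (prefixEq B m b) = 0 :=
    Finset.sum_eq_zero fun b hb => (Finset.mem_filter.1 hb).2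
  exact measure_mono_null hsub (le_antisymm (hle.trans hz.le) (zero_le))

end Aux4

/-- The martingale increments of E[F̂ | F_m], F̂ = (1/M)Σ B_i,
along the natural filtration are almost surely bounded:
|E[F̂|F_m] − E[F̂|F_{m−1}]| ≤ (1/M)(1 + Σ_{i=m+1}^M δ_{m,i}). -/
theorem stmt_14 {Ω : Type*} [MeasurableSpace Ω] (μ : Measure Ω)
    [IsProbabilityMeasure μ]
    (M : ℕ) (hM : 0 < M) (B : Fin M → Ω → ℝ)
    (hmeas : ∀ i, Measurable (B i)) (h01 : ∀ i ω, B i ω = 0 ∨ B i ω = 1)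
    (m : ℕ) (hm1 : 1 ≤ m) (hmM : m ≤ M) :
    ∀ᵐ ω ∂μ,
      |condExp (natFiltration B m) μ (fun ω' => (1 / (M : ℝ)) * ∑ i : Fin M, B i ω') ω
        - condExp (natFiltration B (m - 1)) μ
            (fun ω' => (1 / (M : ℝ)) * ∑ i : Fin M, B i ω') ω| ≤
      (1 / (M : ℝ)) *
        (1 + ∑ i ∈ Finset.univ.filter (fun i : Fin M => m ≤ (i : ℕ)),
          deltaTV μ B m i) := by
  classical
  have hA := condexp_Fhat μ hmeas h01 m
  have hB := condexp_Fhat μ hmeas h01 (m - 1)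
  have hG := ae_atom_pos hmeas h01 μ m
  filter_upwards [hA, hB, hG] with ω hω1 hω2 hω3
  rw [hω1, hω2]
  have hfac : (0 : ℝ) ≤ 1 / (M : ℝ) := by positivity
  rw [← mul_sub, abs_mul, abs_of_nonneg hfac]
  refine mul_le_mul_of_nonneg_left ?_ hfac
  rw [← Finset.sum_sub_distrib]
  refine (Finset.abs_sum_le_sum_abs _ _).trans ?_
  -- notation
  set b : Fin M → Bool := betaB B ω with hbdef
  have hμm : μ (prefixEq B m b) ≠ 0 := hω3
  have hμm1 : μ (prefixEq B (m - 1) b) ≠ 0 := fun h =>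
    hμm (measure_mono_null (prefixEq_mono b) h)
  set i₀ : Fin M := ⟨m - 1, by omega⟩ with hi₀def
  set b' : Fin M → Bool := Function.update b i₀ (!(b i₀)) with hb'def
  -- split the sum
  rw [← Finset.sum_filter_add_sum_filter_not Finset.univ
    (fun i : Fin M => m ≤ (i : ℕ))
    (fun i => |condE μ B m i ω - condE μ B (m - 1) i ω|)]
  rw [add_comm (1 : ℝ)]
  refine add_le_add ?_ ?_
  · -- i ≥ m : bounded by δ
    refine Finset.sum_le_sum fun i hi => ?_
    have him : m ≤ (i : ℕ) := (Finset.mem_filter.1 hi).2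
    -- measure splitting
    have hnum := measure_split hmeas h01 hm1 hmM μ (measurableSet_Beq hmeas i 1) b
    have hden := measure_split hmeas h01 hm1 hmM μ (MeasurableSet.univ) b
    simp only [Set.univ_inter] at hden
    have hagree : ∀ t : Fin M, (t : ℕ) + 1 < m → b t = b' t := by
      intro t ht
      have hne : t ≠ i₀ := fun he => by
        have : (t : ℕ) = m - 1 := by rw [he]
        omega
      rw [hb'def, Function.update_of_ne hne]
    show |condLaw μ B m i b true - condLaw μ B (m - 1) i b true| ≤ deltaTV μ B m i
    by_cases hb'0 : μ (prefixEq B m b') = 0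
    · -- degenerate: the sibling atom is null, the two condLaws coincide
      have hx' : μ ({ω' | B i ω' = 1} ∩ prefixEq B m b') = 0 :=
        measure_mono_null Set.inter_subset_right hb'0
      have heq : condLaw μ B (m - 1) i b true = condLaw μ B m i b true := by
        rw [condLaw_true_def, condLaw_true_def, hnum, hden, hx', hb'0, add_zero,
          add_zero]
      rw [heq, sub_self, abs_zero]
      exact deltaTV_nonneg μ m i
    · -- main case
      set x : ℝ := (μ ({ω' | B i ω' = 1} ∩ prefixEq B m b)).toReal with hx
      set x' : ℝ := (μ ({ω' | B i ω' = 1} ∩ prefixEq B m b')).toReal with hx'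
      set a : ℝ := (μ (prefixEq B m b)).toReal with ha
      set a' : ℝ := (μ (prefixEq B m b')).toReal with ha'
      have hapos : 0 < a := ENNReal.toReal_pos hμm (measure_ne_top μ _)
      have ha'pos : 0 < a' := ENNReal.toReal_pos hb'0 (measure_ne_top μ _)
      have hcm : condLaw μ B m i b true = x / a := by rw [condLaw_true_def]
      have hcm' : condLaw μ B m i b' true = x' / a' := by rw [condLaw_true_def]
      have hcm1 : condLaw μ B (m - 1) i b true = (x + x') / (a + a') := by
        rw [condLaw_true_def, hnum, hden,
          ENNReal.toReal_add (measure_ne_top μ _) (measure_ne_top μ _),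
          ENNReal.toReal_add (measure_ne_top μ _) (measure_ne_top μ _)]
      -- TV bound between the two refined atoms
      have hTV : |condLaw μ B m i b true - condLaw μ B m i b' true|
          ≤ deltaTV μ B m i := by
        have hs := le_deltaTV (B := B) μ m i hagree
        rw [Fintype.sum_bool] at hs
        have hc1 := condLaw_add_compl μ hmeas h01 m i b hμm
        have hc2 := condLaw_add_compl μ hmeas h01 m i b' hb'0
        have hff : condLaw μ B m i b false - condLaw μ B m i b' false
            = -(condLaw μ B m i b true - condLaw μ B m i b' true) := by linarith
        rw [hff, abs_neg] at hs
        linarith [hs]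
      rw [hcm, hcm1]
      have hident : x / a - (x + x') / (a + a')
          = (a' / (a + a')) * (x / a - x' / a') := by
        field_simp
        ring
      rw [hident, abs_mul, abs_of_nonneg (by positivity : (0:ℝ) ≤ a' / (a + a'))]
      have hle1 : a' / (a + a') ≤ 1 := by
        rw [div_le_one (by positivity)]
        linarith
      calc a' / (a + a') * |x / a - x' / a'|
          ≤ 1 * |x / a - x' / a'| :=
            mul_le_mul_of_nonneg_right hle1 (abs_nonneg _)
        _ = |x / a - x' / a'| := one_mul _
        _ ≤ deltaTV μ B m i := by rw [← hcm, ← hcm']; exact hTV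
  · -- i < m : bounded by 1
    have hi₀mem : i₀ ∈ Finset.univ.filter (fun i : Fin M => ¬ m ≤ (i : ℕ)) := by
      rw [Finset.mem_filter]
      exact ⟨Finset.mem_univ _, show ¬ m ≤ m - 1 by omega⟩
    rw [← Finset.sum_erase_add _ _ hi₀mem]
    have hz : ∑ i ∈ (Finset.univ.filter (fun i : Fin M => ¬ m ≤ (i : ℕ))).erase i₀,
        |condE μ B m i ω - condE μ B (m - 1) i ω| = 0 := by
      refine Finset.sum_eq_zero fun i hi => ?_
      have hi1 := Finset.mem_erase.1 hi
      have hlt : (i : ℕ) < m := by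
        have := (Finset.mem_filter.1 hi1.2).2
        omega
      have hlt1 : (i : ℕ) < m - 1 := by
        rcases Nat.lt_or_ge (i : ℕ) (m - 1) with h | h
        · exact h
        · exfalso
          exact hi1.1 (Fin.ext (show (i : ℕ) = m - 1 by omega))
      show |condLaw μ B m i b true - condLaw μ B (m - 1) i b true| = 0
      rw [condLaw_of_lt μ hlt hμm, condLaw_of_lt μ hlt1 hμm1, sub_self, abs_zero]
    rw [hz, zero_add]
    exact abs_condLaw_sub_le_one μ i₀ b b true
end
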